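/- arXiv:1106.4943 — 2 statements merged into one kernel-verified Lean document; each statement's English description precedes it below -/
import Mathlib

section
/- Suppose a : ℝP^n × ℝP^n → ℝP^n is a map whose induced map in mod 2 cohomology sends the degree-one generator x to x₁ + x₂. Then (x₁ + x₂)^{n+1} = 0 in H*(ℝP^n × ℝP^n; ℤ₂), hence 2 divides the binomial coefficient C(n+1, i) for all 1 ≤ i ≤ n, and therefore n+1 is a power of 2 (so n is odd). -/
open MvPolynomial Finset in
lemma coeff_addpow_aux (N i : ℕ) (hi : i ≤ N) :
    MvPolynomial.coeff (Finsupp.single 0 i + Finsupp.single 1 (N - i))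
      ((X 0 + X 1 : MvPolynomial (Fin 2) (ZMod 2)) ^ N) = (N.choose i : ZMod 2) := by
  rw [add_pow]
  rw [MvPolynomial.coeff_sum]
  have key : ∀ k ∈ range (N + 1),
      MvPolynomial.coeff (Finsupp.single 0 i + Finsupp.single 1 (N - i))
        ((X 0 : MvPolynomial (Fin 2) (ZMod 2)) ^ k * X 1 ^ (N - k) *
          (N.choose k : MvPolynomial (Fin 2) (ZMod 2)))
        = if k = i then (N.choose i : ZMod 2) else 0 := by
    intro k hk
    rw [X_pow_eq_monomial, X_pow_eq_monomial, monomial_mul, mul_one]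
    rw [← MvPolynomial.C_eq_coe_nat, mul_comm, MvPolynomial.coeff_C_mul,
      MvPolynomial.coeff_monomial]
    by_cases h : k = i
    · subst h; simp
    · rw [if_neg, if_neg h, mul_zero]
      intro hc
      exact h (by simpa using congrArg (fun f => f 0) hc)
  rw [Finset.sum_congr rfl key, Finset.sum_ite_eq' (range (N+1)) i]
  rw [if_pos (mem_range.mpr (Nat.lt_succ_of_le hi))]

open MvPolynomial in
lemma coeff_kill_aux (N : ℕ) (p : MvPolynomial (Fin 2) (ZMod 2)) (j : Fin 2)
    (m : Fin 2 →₀ ℕ) (hm : m j < N) :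
    MvPolynomial.coeff m (p * X j ^ N) = 0 := by
  rw [X_pow_eq_monomial, MvPolynomial.coeff_mul_monomial']
  rw [if_neg]
  rw [Finsupp.single_le_iff]
  omega

lemma pow_two_of_choose_aux : ∀ m : ℕ, 1 ≤ m →
    (∀ i : ℕ, 1 ≤ i → i < m → 2 ∣ m.choose i) → ∃ k, m = 2 ^ k := by
  intro m
  induction m using Nat.strong_induction_on with
  | _ m ih =>
    intro hm h
    rcases Nat.eq_or_lt_of_le hm with h1 | h1
    · exact ⟨0, h1.symm⟩
    have hme : 2 ∣ m := by
      have := h 1 le_rfl h1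
      simpa using this
    obtain ⟨m', rfl⟩ := hme
    have hm' : 1 ≤ m' := by omega
    have h' : ∀ i : ℕ, 1 ≤ i → i < m' → 2 ∣ m'.choose i := by
      intro i hi him
      have key : (2 * m').choose (2 * i) ≡ ((2*m') % 2).choose ((2*i) % 2) *
          ((2*m') / 2).choose ((2*i) / 2) [MOD 2] :=
        Choose.choose_modEq_choose_mod_mul_choose_div_nat (p := 2)
      simp only [Nat.mul_mod_right, Nat.mul_div_cancel_left _ (by norm_num : 0 < 2),
        Nat.choose_zero_right, one_mul] at key
      have hdvd := h (2 * i) (by omega) (by omega)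
      rw [Nat.modEq_zero_iff_dvd.symm] at hdvd ⊢
      exact key.symm.trans hdvd
    obtain ⟨k, hk⟩ := ih m' (by omega) hm' h'
    exact ⟨k + 1, by rw [hk]; ring⟩

open Polynomial in
/-- The mod 2 cohomology ring of `ℝPⁿ`, modelled as `ℤ₂[x]/(x^{n+1})`. -/
abbrev CohRP (n : ℕ) : Type :=
  (ZMod 2)[X] ⧸ Ideal.span {(X : (ZMod 2)[X]) ^ (n + 1)}

/-- The mod 2 cohomology ring of `ℝPⁿ × ℝPⁿ`, modelled (via Künneth) as
`ℤ₂[x₁, x₂]/(x₁^{n+1}, x₂^{n+1})`. -/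
abbrev CohRP2 (n : ℕ) : Type :=
  MvPolynomial (Fin 2) (ZMod 2) ⧸
    Ideal.span {(MvPolynomial.X 0 : MvPolynomial (Fin 2) (ZMod 2)) ^ (n + 1),
      (MvPolynomial.X 1 : MvPolynomial (Fin 2) (ZMod 2)) ^ (n + 1)}

open Polynomial in
/-- If a map `a : ℝPⁿ × ℝPⁿ → ℝPⁿ` induces, in mod 2 cohomology, a
ring homomorphism sending the degree-one generator `x` to `x₁ + x₂`, then
`(x₁ + x₂)^{n+1} = 0` in `H^*(ℝPⁿ × ℝPⁿ; ℤ₂)`, hence `2 ∣ C(n+1, i)` for `1 ≤ i ≤ n`,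
and therefore `n+1` is a power of `2` (so `n` is odd). -/
theorem no_axial_cohomology_obstruction (n : ℕ) (hn : 1 ≤ n)
    (φ : CohRP n →+* CohRP2 n)
    (hφ : φ (Ideal.Quotient.mk _ (X : (ZMod 2)[X])) =
      Ideal.Quotient.mk _ (MvPolynomial.X 0 + MvPolynomial.X 1)) :
    (Ideal.Quotient.mk _ ((MvPolynomial.X 0 + MvPolynomial.X 1 :
        MvPolynomial (Fin 2) (ZMod 2))) : CohRP2 n) ^ (n + 1) = 0 ∧
      (∀ i : ℕ, 1 ≤ i → i ≤ n → 2 ∣ (n + 1).choose i) ∧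
      (∃ k : ℕ, n + 1 = 2 ^ k) ∧ Odd n := by
  have h0 : (Ideal.Quotient.mk _ ((MvPolynomial.X 0 + MvPolynomial.X 1 :
      MvPolynomial (Fin 2) (ZMod 2))) : CohRP2 n) ^ (n + 1) = 0 := by
    rw [← hφ, ← map_pow, ← map_pow]
    have hx : (Ideal.Quotient.mk (Ideal.span {(X : (ZMod 2)[X]) ^ (n + 1)}))
        ((X : (ZMod 2)[X]) ^ (n + 1)) = 0 :=
      Ideal.Quotient.eq_zero_iff_mem.mpr (Ideal.mem_span_singleton_self _)
    rw [hx, map_zero]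
  have h1 : ((MvPolynomial.X 0 + MvPolynomial.X 1 :
      MvPolynomial (Fin 2) (ZMod 2)) ^ (n + 1)) ∈
      Ideal.span {(MvPolynomial.X 0 : MvPolynomial (Fin 2) (ZMod 2)) ^ (n + 1),
        (MvPolynomial.X 1 : MvPolynomial (Fin 2) (ZMod 2)) ^ (n + 1)} := by
    rw [← Ideal.Quotient.eq_zero_iff_mem, map_pow]
    exact h0
  obtain ⟨a, b, hab⟩ := Ideal.mem_span_pair.mp h1
  have h2 : ∀ i : ℕ, 1 ≤ i → i ≤ n → 2 ∣ (n + 1).choose i := by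
    intro i hi1 hi2
    set m : Fin 2 →₀ ℕ := Finsupp.single 0 i + Finsupp.single 1 (n + 1 - i) with hm
    have hc := congrArg (MvPolynomial.coeff m) hab
    rw [MvPolynomial.coeff_add, coeff_kill_aux, coeff_kill_aux, add_zero,
      coeff_addpow_aux (n + 1) i (by omega)] at hc
    · have : ((n + 1).choose i : ZMod 2) = 0 := hc.symm
      exact (ZMod.natCast_eq_zero_iff _ 2).mp this
    · simp [hm, Finsupp.single_apply]
      omega
    · simp [hm, Finsupp.single_apply]
      omega
  have h3 : ∃ k : ℕ, n + 1 = 2 ^ k := by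
    apply pow_two_of_choose_aux (n + 1) (by omega)
    intro i hi1 hi2
    exact h2 i hi1 (by omega)
  refine ⟨h0, h2, h3, ?_⟩
  obtain ⟨k, hk⟩ := h3
  have hk0 : k ≠ 0 := by
    rintro rfl
    simp at hk
    omega
  have heven : Even (n + 1) := by
    rw [hk]
    exact (Nat.even_pow.mpr ⟨even_two, hk0⟩)
  rw [Nat.even_add_one] at heven
  exact Nat.not_even_iff_odd.mp heven
end

section
/- For every integer n ≥ 1, the greatest common divisor of the binomial coefficients C(n+1, j) for 1 ≤ j ≤ n equals a prime a if n+1 is a power of a, and equals 1 otherwise. Consequently, if an odd integer p > 2 divides n+1 but n+1 and p are not powers of a common odd prime, then there exists 2 ≤ j ≤ n−1 such that p does not divide C(n+1, j). -/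
/-!
Taking `j = 1` shows that the gcd divides `m = n + 1`. If `m = a ^ k`, Kummer's theorem makes
every `C(m, j)` divisible by `a` but `C(a ^ k, a ^ (k - 1))` not divisible by `a ^ 2`. Conversely,
if a prime `q` divides every `C(m, j)`, Lucas' theorem at `j = q ^ v_q(m)` gives
`C(m, j) ≡ m / q ^ v_q(m) (mod q)`, which forces `m` to be a power of `q`.
-/

open Finset

theorem gcd_choose_eq_minFac_of_isPrimePow {m : ℕ} (h : IsPrimePow m) :
    (Icc 1 (m - 1)).gcd m.choose = m.minFac := by
  have hq : m.minFac.Prime := Nat.minFac_prime h.ne_one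
  have hdvd : (Icc 1 (m - 1)).gcd m.choose ∣ m.minFac ^ m.factorization m.minFac := by
    rw [h.minFac_pow_factorization_eq]
    have := gcd_dvd (f := m.choose) (mem_Icc.2 ⟨le_rfl, Nat.le_sub_one_of_lt h.one_lt⟩)
    rwa [Nat.choose_one_right] at this
  obtain ⟨e, -, he⟩ := (Nat.dvd_prime_pow hq).1 hdvd
  have h_one_le : 1 ≤ e := by
    have := Choose.minFac_dvd_gcd_choose_of_isPrimePow h
    rw [he] at this
    exact (Nat.pow_dvd_pow_iff_le_right hq.one_lt).1 (by rwa [pow_one])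
  have h_lt_two : e < 2 := by
    have := Choose.minFac_sq_ndvd_gcd_choose_of_isPrimePow h
    rwa [he, Nat.pow_dvd_pow_iff_le_right hq.one_lt, not_le] at this
  rw [he, show e = 1 by omega, pow_one]

theorem gcd_choose_eq_one_of_not_isPrimePow {m : ℕ} (hm : 2 ≤ m) (h : ¬IsPrimePow m) :
    (Icc 1 (m - 1)).gcd m.choose = 1 := by
  refine Nat.eq_one_iff_not_exists_prime_dvd.2 fun p hp hdvd => h ?_
  have := Fact.mk hp
  have hpow := Choose.eq_pow_multiplicity_of_choose_modEq_zero_nat (by omega)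
    fun i hi => Nat.modEq_zero_iff_dvd.2 (hdvd.trans (gcd_dvd hi))
  refine (isPrimePow_nat_iff m).2 ⟨p, _, hp, Nat.pos_of_ne_zero fun h0 => ?_, hpow.symm⟩
  rw [h0, pow_zero] at hpow
  omega

theorem exists_not_dvd_choose_of_not_dvd_gcd_choose {m p : ℕ} (hpm : p ∣ m)
    (hp : ¬p ∣ (Icc 1 (m - 1)).gcd m.choose) :
    ∃ j, 2 ≤ j ∧ j ≤ m - 2 ∧ ¬p ∣ m.choose j := by
  obtain ⟨j, hj, hpj⟩ : ∃ j ∈ Icc 1 (m - 1), ¬p ∣ m.choose j := by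
    simpa only [Finset.dvd_gcd_iff, not_forall, exists_prop] using hp
  rw [mem_Icc] at hj
  have hj₁ : j ≠ 1 := by
    rintro rfl
    exact hpj (by rwa [Nat.choose_one_right])
  have hj₂ : j ≠ m - 1 := by
    rintro rfl
    exact hpj (by rwa [Nat.choose_symm (by omega), Nat.choose_one_right])
  exact ⟨j, by omega, by omega, hpj⟩

/-- For `n ≥ 1`, the gcd of the binomial coefficients `C(n+1, j)`,
`1 ≤ j ≤ n`, equals a prime `a` if `n+1` is a power of `a` and equals `1` otherwise.
Consequently, if an odd `p > 2` divides `n+1` but `n+1` and `p` are not powers of a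
common odd prime, then some `C(n+1, j)` with `2 ≤ j ≤ n−1` is not divisible by `p`. -/
theorem gcd_central_binomials (n : ℕ) (hn : 1 ≤ n) :
    (∀ a : ℕ, a.Prime → (∃ k : ℕ, n + 1 = a ^ k) →
      (Finset.Icc 1 n).gcd (fun j => (n + 1).choose j) = a) ∧
    ((¬ ∃ a : ℕ, a.Prime ∧ ∃ k : ℕ, n + 1 = a ^ k) →
      (Finset.Icc 1 n).gcd (fun j => (n + 1).choose j) = 1) ∧
    (∀ p : ℕ, 2 < p → Odd p → p ∣ n + 1 →
      (¬ ∃ a : ℕ, a.Prime ∧ Odd a ∧ (∃ i : ℕ, n + 1 = a ^ i) ∧ (∃ j : ℕ, p = a ^ j)) →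
      ∃ j : ℕ, 2 ≤ j ∧ j ≤ n - 1 ∧ ¬ p ∣ (n + 1).choose j) := by
  have hG : (Icc 1 n).gcd (fun j => (n + 1).choose j) = (Icc 1 (n + 1 - 1)).gcd (n + 1).choose :=
    rfl
  have prime_pow : ∀ a : ℕ, a.Prime → (∃ k : ℕ, n + 1 = a ^ k) →
      (Icc 1 n).gcd (fun j => (n + 1).choose j) = a := by
    rintro a ha ⟨k, hk⟩
    have hk0 : k ≠ 0 := by
      rintro rfl
      rw [pow_zero] at hk
      omega
    rw [hG, gcd_choose_eq_minFac_of_isPrimePow (hk ▸ ha.isPrimePow.pow hk0), hk,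
      ha.pow_minFac hk0]
  have not_prime_pow : (¬∃ a : ℕ, a.Prime ∧ ∃ k : ℕ, n + 1 = a ^ k) →
      (Icc 1 n).gcd (fun j => (n + 1).choose j) = 1 := by
    intro h
    rw [hG]
    refine gcd_choose_eq_one_of_not_isPrimePow (by omega) fun hpp => h ?_
    obtain ⟨a, k, ha, -, hk⟩ := (isPrimePow_nat_iff _).1 hpp
    exact ⟨a, ha, k, hk.symm⟩
  refine ⟨prime_pow, not_prime_pow, fun p hp2 hpodd hpm hno => ?_⟩
  have hpG : ¬p ∣ (Icc 1 (n + 1 - 1)).gcd (n + 1).choose := by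
    rw [← hG]
    by_cases hpp : ∃ a : ℕ, a.Prime ∧ ∃ k : ℕ, n + 1 = a ^ k
    · obtain ⟨a, ha, hk⟩ := hpp
      rw [prime_pow a ha hk]
      intro hpa
      obtain rfl : p = a := (ha.eq_one_or_self_of_dvd p hpa).resolve_left (by omega)
      exact hno ⟨p, ha, hpodd, hk, 1, (pow_one p).symm⟩
    · rw [not_prime_pow hpp, Nat.dvd_one]
      omega
  obtain ⟨j, hj₂, hjn, hpj⟩ := exists_not_dvd_choose_of_not_dvd_gcd_choose hpm hpG
  exact ⟨j, hj₂, by omega, hpj⟩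
end
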